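/- Let ⟨A, B, f, i⟩ be a FIDL-module, A' a bounded sublattice of A, and B' a bounded sublattice of B. If for all prime filters P, Q, Q₁ of A and R₁ of B with f(Q₁,R₁) ⊆ P and P ∩ A' ⊆ Q, there exist prime filters Q₂ of A and R₂ of B such that Q₁ ∩ A' ⊆ Q₂, R₁ ∩ B' ⊆ R₂ and f(Q₂,R₂) ⊆ Q, then f(a,b) ∈ A' for every a ∈ A' and b ∈ B' (i.e., ⟨A', B', f⟩ is a FDL-subalgebra). -/

import Mathlib

/-!
By the prime filter theorem, `c ∈ A'` as soon as `c ∈ P → c ∈ Q` for all prime filters `P`, `Q`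
with `P ∩ A' ⊆ Q`. If `f a b ∈ P`, the prime filter theorem applied one argument at a time gives
prime filters `Q₁ ∋ a`, `R₁ ∋ b` with `f(Q₁, R₁) ⊆ P`. For `a ∈ A'`, `b ∈ B'` the hypothesis then
yields `Q₂ ∋ a`, `R₂ ∋ b` with `f(Q₂, R₂) ⊆ Q`, so `f a b ∈ Q`.
-/

def IsLatFilter {α : Type*} [Lattice α] [BoundedOrder α] (F : Set α) : Prop :=
  ⊤ ∈ F ∧ (∀ x y : α, x ∈ F → x ≤ y → y ∈ F) ∧ ∀ x y : α, x ∈ F → y ∈ F → x ⊓ y ∈ F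

def IsPrimeLatFilter {α : Type*} [Lattice α] [BoundedOrder α] (F : Set α) : Prop :=
  IsLatFilter F ∧ F ≠ Set.univ ∧ ∀ x y : α, x ⊔ y ∈ F → x ∈ F ∨ y ∈ F

def IsFIDL {A B : Type*} [DistribLattice A] [BoundedOrder A]
    [DistribLattice B] [BoundedOrder B] (f : A → B → A) (i : B → A → A) : Prop :=
  (∀ x y : A, ∀ b : B, f (x ⊔ y) b = f x b ⊔ f y b) ∧
  (∀ x : A, ∀ b c : B, f x (b ⊔ c) = f x b ⊔ f x c) ∧
  (∀ b : B, f ⊥ b = ⊥) ∧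
  (∀ x : A, f x ⊥ = ⊥) ∧
  (∀ b : B, ∀ x y : A, i b (x ⊓ y) = i b x ⊓ i b y) ∧
  (∀ b c : B, ∀ x : A, i (b ⊔ c) x = i b x ⊓ i c x) ∧
  (∀ b : B, i b ⊤ = ⊤)

def fSet {A B : Type*} [Lattice A] (f : A → B → A) (G : Set A) (H : Set B) : Set A :=
  {x : A | ∃ g ∈ G, ∃ h ∈ H, f g h ≤ x}

def iSet {A B : Type*} [Lattice A] (i : B → A → A) (H : Set B) (G : Set A) : Set A :=
  {x : A | ∃ h ∈ H, ∃ g ∈ G, g ≤ i h x}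

def IsBddSublattice {α : Type*} [Lattice α] [BoundedOrder α] (S : Set α) : Prop :=
  ⊥ ∈ S ∧ ⊤ ∈ S ∧ (∀ x ∈ S, ∀ y ∈ S, x ⊔ y ∈ S) ∧ (∀ x ∈ S, ∀ y ∈ S, x ⊓ y ∈ S)

open Order

theorem IsPrimeLatFilter.bot_notMem {α : Type*} [Lattice α] [BoundedOrder α] {P : Set α}
    (hP : IsPrimeLatFilter P) : ⊥ ∉ P :=
  fun h => hP.2.1 (Set.eq_univ_of_forall fun x => hP.1.2.1 ⊥ x h bot_le)

theorem IsLatFilter.infClosed {α : Type*} [Lattice α] [BoundedOrder α] {F : Set α}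
    (hF : IsLatFilter F) : InfClosed F :=
  fun _ hx _ hy => hF.2.2 _ _ hx hy

section PrimeFilters

variable {α : Type*} [DistribLattice α] [BoundedOrder α]

theorem isPrimeLatFilter_compl {J : Ideal α} (hJ : J.IsPrime) : IsPrimeLatFilter (J : Set α)ᶜ :=
  ⟨⟨hJ.top_notMem, fun _ _ hx hxy hy => hx (J.lower hxy hy),
      fun _ _ hx hy hxy => (hJ.mem_or_mem hxy).elim hx hy⟩,
    fun h => (h.symm ▸ Set.mem_univ ⊥ : ⊥ ∈ (J : Set α)ᶜ) J.bot_mem,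
    fun _ _ hxy => not_and_or.1 fun h => hxy (J.sup_mem h.1 h.2)⟩

theorem exists_isPrimeLatFilter_of_not_le {S T : Set α} (hS : S.Nonempty) (hS' : InfClosed S)
    (hT : T.Nonempty) (hT' : SupClosed T) (hST : ∀ s ∈ S, ∀ t ∈ T, ¬ s ≤ t) :
    ∃ P, IsPrimeLatFilter P ∧ S ⊆ P ∧ Disjoint P T := by
  have hF : IsPFilter (upperClosure S : Set α) := by
    refine .of_def (hS.mono subset_upperClosure) ?_ fun hxy hx => (upperClosure S).upper hxy hx
    rintro x ⟨s, hs, hsx⟩ y ⟨t, ht, hty⟩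
    exact ⟨s ⊓ t, subset_upperClosure (hS' hs ht), inf_le_of_left_le hsx, inf_le_of_right_le hty⟩
  have hI : IsIdeal (lowerClosure T : Set α) := by
    refine ⟨(lowerClosure T).lower, hT.mono subset_lowerClosure, ?_⟩
    rintro x ⟨s, hs, hxs⟩ y ⟨t, ht, hyt⟩
    exact ⟨s ⊔ t, subset_lowerClosure (hT' hs ht), le_sup_of_le_left hxs, le_sup_of_le_right hyt⟩
  have hFI : Disjoint (hF.toPFilter : Set α) hI.toIdeal := by
    rw [Set.disjoint_left]
    rintro x ⟨s, hs, hsx⟩ ⟨t, ht, hxt⟩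
    exact hST s hs t ht (hsx.trans hxt)
  obtain ⟨J, hJ, hIJ, hFJ⟩ := DistribLattice.prime_ideal_of_disjoint_filter_ideal hFI
  refine ⟨_, isPrimeLatFilter_compl hJ, fun s hs => Set.disjoint_left.1 hFJ
    (subset_upperClosure hs : s ∈ (upperClosure S : Set α)), ?_⟩
  exact disjoint_compl_left.mono_right fun t ht => hIJ (subset_lowerClosure ht)

theorem IsBddSublattice.mem_of_forall_isPrimeLatFilter {A' : Set α} (hA' : IsBddSublattice A')
    {c : α} (h : ∀ P Q : Set α, IsPrimeLatFilter P → IsPrimeLatFilter Q → P ∩ A' ⊆ Q →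
      c ∈ P → c ∈ Q) :
    c ∈ A' := by
  obtain ⟨hbot, htop, hsup, hinf⟩ := hA'
  by_contra hc
  -- `Q` contains every element of `A'` above `c` but not `c`; `P` contains `c` and misses `A' \ Q`.
  obtain ⟨Q, hQ, hAQ, hcQ⟩ := exists_isPrimeLatFilter_of_not_le (S := A' ∩ Set.Ici c) (T := {c})
    ⟨⊤, htop, le_top⟩ (fun x hx y hy => ⟨hinf x hx.1 y hy.1, le_inf hx.2 hy.2⟩)
    (Set.singleton_nonempty c) supClosed_singleton
    (by rintro s ⟨hs, hcs⟩ t rfl hsc; exact hc (le_antisymm hsc hcs ▸ hs))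
  obtain ⟨P, hP, hcP, hPQ⟩ := exists_isPrimeLatFilter_of_not_le (S := {c}) (T := A' \ Q)
    (Set.singleton_nonempty c) infClosed_singleton ⟨⊥, hbot, hQ.bot_notMem⟩
    (fun x hx y hy => ⟨hsup x hx.1 y hy.1, fun hxy => (hQ.2.2 x y hxy).elim hx.2 hy.2⟩)
    (by rintro s rfl t ⟨ht, htQ⟩ hct; exact htQ (hAQ ⟨ht, hct⟩))
  have hPA'Q : P ∩ A' ⊆ Q := fun x hx => by_contra fun hxQ =>
    Set.disjoint_left.1 hPQ hx.1 ⟨hx.2, hxQ⟩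
  exact Set.disjoint_singleton_right.1 hcQ (h P Q hP hQ hPA'Q (hcP rfl))

end PrimeFilters

theorem exists_isPrimeLatFilter_right {A B C : Type*} [SemilatticeInf A]
    [DistribLattice B] [BoundedOrder B] [Lattice C] [BoundedOrder C] {f : A → B → C}
    (hmono : ∀ b, Monotone (f · b)) (hsup : ∀ x b c, f x (b ⊔ c) = f x b ⊔ f x c)
    (hbot : ∀ x, f x ⊥ = ⊥) {P : Set C} (hP : IsPrimeLatFilter P) {G : Set A} {H : Set B}
    (hG : G.Nonempty) (hG' : InfClosed G) (hH : H.Nonempty) (hH' : InfClosed H)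
    (hGH : ∀ g ∈ G, ∀ h ∈ H, f g h ∈ P) :
    ∃ R, IsPrimeLatFilter R ∧ H ⊆ R ∧ ∀ g ∈ G, ∀ r ∈ R, f g r ∈ P := by
  -- `T` is an ideal because `P` is prime; a prime filter containing `H` and missing `T` works.
  set T := {y | ∃ g ∈ G, f g y ∉ P}
  have hT : T.Nonempty :=
    let ⟨g, hg⟩ := hG
    ⟨⊥, g, hg, (hbot g).symm ▸ hP.bot_notMem⟩
  have hT' : SupClosed T := by
    rintro y ⟨g, hg, hgy⟩ z ⟨g', hg', hgz⟩
    refine ⟨g ⊓ g', hG' hg hg', fun hmem => ?_⟩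
    rw [hsup] at hmem
    rcases hP.2.2 _ _ hmem with hy | hz
    · exact hgy (hP.1.2.1 _ _ hy (hmono y inf_le_left))
    · exact hgz (hP.1.2.1 _ _ hz (hmono z inf_le_right))
  have hHT : ∀ h ∈ H, ∀ t ∈ T, ¬ h ≤ t := by
    rintro h hh t ⟨g, hg, hgt⟩ hht
    exact hgt (hP.1.2.1 _ _ (hGH g hg h hh) (Monotone.of_map_sup (hsup g) hht))
  obtain ⟨R, hR, hHR, hRT⟩ := exists_isPrimeLatFilter_of_not_le hH hH' hT hT' hHT
  exact ⟨R, hR, hHR, fun g hg r hr => by_contra fun hgr => Set.disjoint_left.1 hRT hr ⟨g, hg, hgr⟩⟩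

theorem IsPrimeLatFilter.exists_fSet_subset {A B : Type*} [DistribLattice A] [BoundedOrder A]
    [DistribLattice B] [BoundedOrder B] {f : A → B → A}
    (hf₁ : ∀ x y : A, ∀ b : B, f (x ⊔ y) b = f x b ⊔ f y b)
    (hf₂ : ∀ x : A, ∀ b c : B, f x (b ⊔ c) = f x b ⊔ f x c)
    (hf₃ : ∀ b : B, f ⊥ b = ⊥) (hf₄ : ∀ x : A, f x ⊥ = ⊥)
    {P : Set A} (hP : IsPrimeLatFilter P) {a : A} {b : B} (hab : f a b ∈ P) :
    ∃ Q₁ : Set A, ∃ R₁ : Set B, IsPrimeLatFilter Q₁ ∧ IsPrimeLatFilter R₁ ∧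
      a ∈ Q₁ ∧ b ∈ R₁ ∧ fSet f Q₁ R₁ ⊆ P := by
  obtain ⟨Q₁, hQ₁, haQ₁, hQ₁P⟩ := exists_isPrimeLatFilter_right (f := flip f)
    (fun x => Monotone.of_map_sup (hf₂ x)) (fun b x y => hf₁ x y b) hf₃ hP
    (Set.singleton_nonempty b) infClosed_singleton (Set.singleton_nonempty a) infClosed_singleton
    (by rintro _ rfl _ rfl; exact hab)
  obtain ⟨R₁, hR₁, hbR₁, hR₁P⟩ := exists_isPrimeLatFilter_right
    (fun b => Monotone.of_map_sup (hf₁ · · b)) hf₂ hf₄ hP ⟨a, haQ₁ rfl⟩ hQ₁.1.infClosed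
    (Set.singleton_nonempty b) infClosed_singleton (fun q hq _ h => h ▸ hQ₁P b rfl q hq)
  refine ⟨Q₁, R₁, hQ₁, hR₁, haQ₁ rfl, hbR₁ rfl, ?_⟩
  rintro x ⟨q, hq, r, hr, hx⟩
  exact hP.1.2.1 _ _ (hR₁P q hq r hr) hx

theorem stmt_17_general {A B : Type*} [DistribLattice A] [BoundedOrder A]
    [DistribLattice B] [BoundedOrder B] (f : A → B → A) (i : B → A → A)
    (hM : IsFIDL f i) (A' : Set A) (B' : Set B)
    (hA' : IsBddSublattice A')
    (hyp : ∀ P Q Q₁ : Set A, ∀ R₁ : Set B,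
      IsPrimeLatFilter P → IsPrimeLatFilter Q → IsPrimeLatFilter Q₁ →
      IsPrimeLatFilter R₁ → fSet f Q₁ R₁ ⊆ P → P ∩ A' ⊆ Q →
      ∃ Q₂ : Set A, ∃ R₂ : Set B, IsPrimeLatFilter Q₂ ∧ IsPrimeLatFilter R₂ ∧
        Q₁ ∩ A' ⊆ Q₂ ∧ R₁ ∩ B' ⊆ R₂ ∧ fSet f Q₂ R₂ ⊆ Q) :
    ∀ a ∈ A', ∀ b ∈ B', f a b ∈ A' := by
  intro a ha b hb
  obtain ⟨hf₁, hf₂, hf₃, hf₄, -⟩ := hM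
  refine hA'.mem_of_forall_isPrimeLatFilter fun P Q hP hQ hPQ hfP => ?_
  obtain ⟨Q₁, R₁, hQ₁, hR₁, haQ₁, hbR₁, hQ₁R₁P⟩ := hP.exists_fSet_subset hf₁ hf₂ hf₃ hf₄ hfP
  obtain ⟨Q₂, R₂, -, -, hQ₁Q₂, hR₁R₂, hQ₂R₂Q⟩ := hyp P Q Q₁ R₁ hP hQ hQ₁ hR₁ hQ₁R₁P hPQ
  exact hQ₂R₂Q ⟨a, hQ₁Q₂ ⟨haQ₁, ha⟩, b, hR₁R₂ ⟨hbR₁, hb⟩, le_rfl⟩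

theorem stmt_17 {A B : Type*} [DistribLattice A] [BoundedOrder A]
    [DistribLattice B] [BoundedOrder B] (f : A → B → A) (i : B → A → A)
    (hM : IsFIDL f i) (A' : Set A) (B' : Set B)
    (hA' : IsBddSublattice A') (hB' : IsBddSublattice B')
    (hyp : ∀ P Q Q₁ : Set A, ∀ R₁ : Set B,
      IsPrimeLatFilter P → IsPrimeLatFilter Q → IsPrimeLatFilter Q₁ →
      IsPrimeLatFilter R₁ → fSet f Q₁ R₁ ⊆ P → P ∩ A' ⊆ Q →
      ∃ Q₂ : Set A, ∃ R₂ : Set B, IsPrimeLatFilter Q₂ ∧ IsPrimeLatFilter R₂ ∧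
        Q₁ ∩ A' ⊆ Q₂ ∧ R₁ ∩ B' ⊆ R₂ ∧ fSet f Q₂ R₂ ⊆ Q) :
    ∀ a ∈ A', ∀ b ∈ B', f a b ∈ A' :=
  stmt_17_general f i hM A' B' hA' hyp
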